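/- arXiv:1303.5171 — 4 statements merged into one kernel-verified Lean document; each statement's English description precedes it below -/
import Mathlib

section
/- For any connected graph G with at least 3 vertices, κ₃(G) ≤ κ(G), where κ(G) is the vertex connectivity of G. -/
open Filter Asymptotics
open scoped Classical

noncomputable section

/-- The number of edges of a simple graph on a finite vertex type. -/
def edgeCount {V : Type*} [Fintype V] (G : SimpleGraph V) : ℕ :=
  G.edgeFinset.card

/-- Probability in the Erdős–Rényi model `G(n,p)` of a set `A` of graphs on `Fin n`:
each of the `n.choose 2` possible edges is present independently with probability `p`. -/
def gnpProb (n : ℕ) (p : ℝ) (A : Set (SimpleGraph (Fin n))) : ℝ :=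
  ∑ G ∈ Finset.univ.filter (fun G => G ∈ A),
    p ^ edgeCount G * (1 - p) ^ (n.choose 2 - edgeCount G)

/-- Probability in the uniform model `G(n,M)` of a set `A` of graphs on `Fin n`:
all graphs with exactly `M` edges are equally likely. -/
def gnmProb (n M : ℕ) (A : Set (SimpleGraph (Fin n))) : ℝ :=
  ((Finset.univ.filter (fun G : SimpleGraph (Fin n) => edgeCount G = M ∧ G ∈ A)).card : ℝ) /
    ((Finset.univ.filter (fun G : SimpleGraph (Fin n) => edgeCount G = M)).card : ℝ)

/-- `κ(S)`: the largest number of internally disjoint trees connecting `S`, i.e. trees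
`T₁, …, T_k` of `G` with `S ⊆ V(Tᵢ)`, `V(Tᵢ) ∩ V(Tⱼ) = S` and `E(Tᵢ) ∩ E(Tⱼ) = ∅`
for `i ≠ j`. -/
def kappaSet {V : Type*} (G : SimpleGraph V) (S : Set V) : ℕ :=
  sSup {k | ∃ T : Fin k → G.Subgraph,
    (∀ i, S ⊆ (T i).verts ∧ ((T i).coe).IsTree) ∧
    (∀ i j, i ≠ j → (T i).verts ∩ (T j).verts = S ∧
      (T i).edgeSet ∩ (T j).edgeSet = ∅)}

/-- `λ(S)`: the largest number of pairwise edge-disjoint trees of `G` each containing `S`. -/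
def lambdaSet {V : Type*} (G : SimpleGraph V) (S : Set V) : ℕ :=
  sSup {k | ∃ T : Fin k → G.Subgraph,
    (∀ i, S ⊆ (T i).verts ∧ ((T i).coe).IsTree) ∧
    (∀ i j, i ≠ j → (T i).edgeSet ∩ (T j).edgeSet = ∅)}

/-- The generalized `r`-connectivity `κ_r(G)`: the minimum of `κ(S)` over `r`-subsets `S`,
and `0` if `G` is disconnected. -/
def genKappa {V : Type*} [Fintype V] (r : ℕ) (G : SimpleGraph V) : ℕ :=
  if G.Connected then
    sInf {k | ∃ S : Finset V, S.card = r ∧ kappaSet G ↑S = k}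
  else 0

/-- The generalized `r`-edge-connectivity `λ_r(G)`: the minimum of `λ(S)` over
`r`-subsets `S`, and `0` if `G` is disconnected. -/
def genLambda {V : Type*} [Fintype V] (r : ℕ) (G : SimpleGraph V) : ℕ :=
  if G.Connected then
    sInf {k | ∃ S : Finset V, S.card = r ∧ lambdaSet G ↑S = k}
  else 0

/-- The vertex connectivity `κ(G)`: the largest `k` such that `G` is `k`-connected,
i.e. `k < |V|` and the removal of fewer than `k` vertices leaves a connected graph. -/
def vertexConnectivity {V : Type*} [Fintype V] (G : SimpleGraph V) : ℕ :=
  sSup {k | k < Fintype.card V ∧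
    ∀ S : Finset V, S.card < k → (G.induce ((↑S : Set V)ᶜ)).Connected}

/-- The edge connectivity `λ(G)`: the largest `k` such that removing fewer than `k`
edges always leaves a connected graph. -/
def edgeConnectivity {V : Type*} [Fintype V] (G : SimpleGraph V) : ℕ :=
  sSup {k | ∀ F : Finset (Sym2 V), F.card < k → (G.deleteEdges ↑F).Connected}

/-- The minimum degree `δ(G)`. -/
def minDeg {V : Type*} [Fintype V] (G : SimpleGraph V) : ℕ :=
  G.minDegree

/-- The number of children of `v` in the graph `H` viewed as rooted at `r`:
neighbours of `v` lying one step further from the root. -/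
def childCount {W : Type*} (H : SimpleGraph W) (r v : W) : ℕ :=
  {w | H.Adj v w ∧ H.dist r w = H.dist r v + 1}.ncard

/-- The depth of the graph `H` viewed as rooted at `r`: the largest distance from `r`. -/
def rootedDepth {W : Type*} (H : SimpleGraph W) (r : W) : ℕ :=
  sSup (Set.range (H.dist r))

/-- `T` is a subtree of `G` rooted at `r`, of depth `d`, in which every non-leaf
vertex has exactly `t` children (a `t`-ary tree of depth `d`). -/
def IsAryTreeOfDepth {V : Type*} {G : SimpleGraph V} (T : G.Subgraph) (r : V)
    (t d : ℕ) : Prop :=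
  ∃ hr : r ∈ T.verts,
    T.coe.IsTree ∧ rootedDepth T.coe ⟨r, hr⟩ = d ∧
      ∀ v : T.verts, childCount T.coe ⟨r, hr⟩ v = 0 ∨ childCount T.coe ⟨r, hr⟩ v = t

end

/-!
If `κ(G) = |V| - 1`, any `3`-set `S` works, because the trees connecting `S` use pairwise
distinct edges at a vertex `x ∈ S`, so `κ(S) ≤ deg x ≤ |V| - 1`. Otherwise some set `W` of at
most `κ(G)` vertices separates two vertices `a, b`. If a third vertex `z` lies outside `W`, each
tree connecting `{a, b, z}` contains an `a`–`b` path, hence a vertex of `W`, and internal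
disjointness makes these vertices distinct. If not, `a` and `b` are non-adjacent and are the
only vertices outside `W`, so `deg a ≤ |W|` and the degree bound applies to `{a, b, z}` for any
`z ∈ W`.
-/

section

open SimpleGraph

variable {V : Type*} {G : SimpleGraph V}

theorem SimpleGraph.Walk.exists_mem_support_notMem_of_not_reachable_induce {s : Set V} {a b : V}
    (ha : a ∈ s) (hb : b ∈ s) (h : ¬ (G.induce s).Reachable ⟨a, ha⟩ ⟨b, hb⟩) (p : G.Walk a b) :
    ∃ w ∈ p.support, w ∉ s := by
  by_contra! hp
  exact h ⟨p.induce s hp⟩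

theorem genKappa_le_kappaSet [Fintype V] {r : ℕ} {S : Finset V} (hS : S.card = r) :
    genKappa r G ≤ kappaSet G S := by
  unfold genKappa
  split_ifs
  · exact Nat.sInf_le ⟨S, hS, rfl⟩
  · exact Nat.zero_le _

theorem kappaSet_le_degree {S : Set V} {x y : V} [Fintype (G.neighborSet x)]
    (hx : x ∈ S) (hy : y ∈ S) (hxy : x ≠ y) : kappaSet G S ≤ G.degree x := by
  refine csSup_le' ?_
  rintro k ⟨T, hT, hdisj⟩
  have hadj (i : Fin k) : ∃ v, (T i).Adj x v := by
    have : Nontrivial (T i).verts :=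
      ⟨⟨⟨x, (hT i).1 hx⟩, ⟨y, (hT i).1 hy⟩, by simpa using hxy⟩⟩
    exact Subgraph.Preconnected.exists_adj_of_nontrivial ⟨(hT i).2.connected.preconnected⟩
      ⟨x, (hT i).1 hx⟩
  choose v hv using hadj
  have hinj : Set.InjOn v (Finset.univ : Finset (Fin k)) := by
    intro i _ j _ hij
    by_contra hne
    have hi : s(x, v i) ∈ (T i).edgeSet := hv i
    have hj : s(x, v i) ∈ (T j).edgeSet := hij ▸ hv j
    simpa [(hdisj i j hne).2] using Set.mem_inter hi hj
  simpa using Finset.card_le_card_of_injOn v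
    (fun i _ => (G.mem_neighborFinset x _).2 ((T i).adj_sub (hv i))) hinj

theorem kappaSet_le_card_of_forall_walk {S : Set V} {x y : V} (W : Finset V)
    (hx : x ∈ S) (hy : y ∈ S) (hWS : Disjoint (W : Set V) S)
    (hW : ∀ p : G.Walk x y, ∃ w ∈ p.support, w ∈ W) : kappaSet G S ≤ W.card := by
  refine csSup_le' ?_
  rintro k ⟨T, hT, hdisj⟩
  have hcut (i : Fin k) : ∃ w ∈ W, w ∈ (T i).verts := by
    have hxi : x ∈ (T i).verts := (hT i).1 hx
    have hyi : y ∈ (T i).verts := (hT i).1 hy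
    obtain ⟨p, hpT⟩ := (Subgraph.preconnected_iff_forall_exists_walk_subgraph _).1
      ⟨(hT i).2.connected.preconnected⟩ hxi hyi
    obtain ⟨w, hwp, hwW⟩ := hW p
    exact ⟨w, hwW, hpT.1 (p.mem_verts_toSubgraph.2 hwp)⟩
  choose w hwW hwT using hcut
  have hinj : Set.InjOn w (Finset.univ : Finset (Fin k)) := by
    intro i _ j _ hij
    by_contra hne
    have hS : w i ∈ S := (hdisj i j hne).1 ▸ ⟨hwT i, hij ▸ hwT j⟩
    exact hWS.notMem_of_mem_left (Finset.mem_coe.2 (hwW i)) hS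
  simpa using Finset.card_le_card_of_injOn w (fun i _ => hwW i) hinj

section vertexConnectivity

variable [Fintype V]

theorem vertexConnectivity_lt_card [Nonempty V] : vertexConnectivity G < Fintype.card V := by
  have hmem := Nat.sSup_mem (s := {k | k < Fintype.card V ∧
      ∀ S : Finset V, S.card < k → (G.induce ((↑S : Set V)ᶜ)).Connected})
    ⟨0, Fintype.card_pos, fun _ h => absurd h (Nat.not_lt_zero _)⟩
    ⟨Fintype.card V, fun _ hk => hk.1.le⟩
  exact hmem.1

theorem exists_card_le_vertexConnectivity_not_connected_induce_compl (h : vertexConnectivity G + 1 < Fintype.card V) :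
    ∃ W : Finset V, W.card ≤ vertexConnectivity G ∧ ¬ (G.induce ((W : Set V)ᶜ)).Connected := by
  by_contra! hall
  have hmem : vertexConnectivity G + 1 ∈ {k | k < Fintype.card V ∧
      ∀ S : Finset V, S.card < k → (G.induce ((↑S : Set V)ᶜ)).Connected} :=
    ⟨h, fun W hW => hall W (Nat.lt_succ_iff.1 hW)⟩
  have := le_csSup ⟨Fintype.card V, fun _ hk => hk.1.le⟩ hmem
  exact Nat.not_succ_le_self _ this

theorem exists_separating_finset_card_le_vertexConnectivity (h : vertexConnectivity G + 1 < Fintype.card V) :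
    ∃ W : Finset V, W.card ≤ vertexConnectivity G ∧ ∃ a b, a ∉ W ∧ b ∉ W ∧ a ≠ b ∧
      ∀ p : G.Walk a b, ∃ w ∈ p.support, w ∈ W := by
  obtain ⟨W, hWκ, hW⟩ := exists_card_le_vertexConnectivity_not_connected_induce_compl h
  obtain ⟨c, hcW⟩ : ∃ c, c ∉ W := by
    by_contra! hall
    have := (Finset.eq_univ_of_forall hall ▸ hWκ : Finset.univ.card ≤ _)
    rw [Finset.card_univ] at this
    omega
  obtain ⟨⟨a, ha⟩, ⟨b, hb⟩, hab⟩ :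
      ∃ u v : ↥((W : Set V)ᶜ), ¬ (G.induce ((W : Set V)ᶜ)).Reachable u v := by
    by_contra! hall
    exact hW ((connected_iff _).2 ⟨hall, ⟨⟨c, hcW⟩⟩⟩)
  refine ⟨W, hWκ, a, b, ha, hb, fun h => hab (h ▸ Reachable.refl _), fun p => ?_⟩
  obtain ⟨w, hwp, hwW⟩ := p.exists_mem_support_notMem_of_not_reachable_induce ha hb hab
  exact ⟨w, hwp, not_not.1 hwW⟩

theorem exists_card_eq_three_kappaSet_le_of_separating (hV : 3 ≤ Fintype.card V) {W : Finset V}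
    {a b : V} (ha : a ∉ W) (hb : b ∉ W) (hab : a ≠ b)
    (hsep : ∀ p : G.Walk a b, ∃ w ∈ p.support, w ∈ W) :
    ∃ S : Finset V, S.card = 3 ∧ kappaSet G S ≤ W.card := by
  by_cases hz : ∃ z ∉ W, z ≠ a ∧ z ≠ b
  · obtain ⟨z, hzW, hza, hzb⟩ := hz
    refine ⟨{a, b, z}, Finset.card_eq_three.2 ⟨a, b, z, hab, hza.symm, hzb.symm, rfl⟩,
      kappaSet_le_card_of_forall_walk W (by simp) (by simp) ?_ hsep⟩
    simp [ha, hb, hzW]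
  · push Not at hz
    obtain ⟨z, -, hzab⟩ := Finset.exists_mem_notMem_of_card_lt_card
      (s := {a, b}) (t := Finset.univ)
      (Finset.card_le_two.trans_lt (by rw [Finset.card_univ]; omega))
    obtain ⟨hza, hzb⟩ : z ≠ a ∧ z ≠ b := by simpa using hzab
    have hnadj : ¬ G.Adj a b := fun h => by
      obtain ⟨w, hw, hwW⟩ := hsep h.toWalk
      rcases List.mem_pair.1 hw with rfl | rfl
      exacts [ha hwW, hb hwW]
    have hN : G.neighborFinset a ⊆ W := by
      intro v hv
      by_contra hvW
      rw [mem_neighborFinset] at hv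
      obtain rfl := hz v hvW (G.ne_of_adj hv).symm
      exact hnadj hv
    exact ⟨{a, b, z}, Finset.card_eq_three.2 ⟨a, b, z, hab, hza.symm, hzb.symm, rfl⟩,
      (kappaSet_le_degree (by simp) (by simp) hab).trans (Finset.card_le_card hN)⟩

end vertexConnectivity

end

theorem genKappa_three_le_vertexConnectivity_general {V : Type*} [Fintype V] (G : SimpleGraph V)
    (hV : 3 ≤ Fintype.card V) :
    genKappa 3 G ≤ vertexConnectivity G := by
  obtain ⟨S, hS, hκS⟩ : ∃ S : Finset V, S.card = 3 ∧ kappaSet G S ≤ vertexConnectivity G := by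
    rcases lt_or_ge (vertexConnectivity G + 1) (Fintype.card V) with hκ | hκ
    · obtain ⟨W, hWκ, a, b, ha, hb, hab, hsep⟩ := exists_separating_finset_card_le_vertexConnectivity hκ
      obtain ⟨S, hS, hκS⟩ := exists_card_eq_three_kappaSet_le_of_separating hV ha hb hab hsep
      exact ⟨S, hS, hκS.trans hWκ⟩
    · obtain ⟨S, -, hS⟩ := Finset.exists_subset_card_eq (s := Finset.univ) hV
      obtain ⟨x, hx, y, hy, hxy⟩ := Finset.one_lt_card.1 (hS ▸ (by norm_num : 1 < 3))
      refine ⟨S, hS, (kappaSet_le_degree hx hy hxy).trans ?_⟩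
      have := G.degree_lt_card_verts x
      omega
  exact (genKappa_le_kappaSet hS).trans hκS

/-- For any connected graph `G` on at least 3 vertices, `κ₃(G) ≤ κ(G)`. -/
theorem genKappa_three_le_vertexConnectivity {V : Type*} [Fintype V] (G : SimpleGraph V)
    (hG : G.Connected) (hV : 3 ≤ Fintype.card V) :
    genKappa 3 G ≤ vertexConnectivity G :=
  genKappa_three_le_vertexConnectivity_general G hV
end

section
/- For any connected graph G with at least 3 vertices, κ₃(G) ≤ λ₃(G) ≤ δ(G), where δ(G) is the minimum degree of G. -/
open Filter Asymptotics
open scoped Classical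

/-!
A tree containing two distinct vertices `v` and `w` of `S` contains an edge at `v`, namely the
first edge of its `v`–`w` path. Edge-disjoint trees use distinct such edges, so `λ(S) ≤ deg v`;
choosing `S` through a vertex of minimum degree gives `λ_r(G) ≤ δ(G)`. Internally disjoint trees
are in particular edge-disjoint, whence `κ(S) ≤ λ(S)` for every `S`, and so `κ_r(G) ≤ λ_r(G)`.
-/

namespace SimpleGraph

variable {V : Type*} {G : SimpleGraph V}

theorem Subgraph.exists_adj_of_preconnected {H : G.Subgraph} (hH : H.coe.Preconnected)
    {v w : V} (hv : v ∈ H.verts) (hw : w ∈ H.verts) (hvw : v ≠ w) : ∃ u, H.Adj v u := by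
  obtain ⟨p⟩ := hH ⟨v, hv⟩ ⟨w, hw⟩
  have hne : (⟨v, hv⟩ : H.verts) ≠ ⟨w, hw⟩ := fun h => hvw (congrArg Subtype.val h)
  exact ⟨p.getVert 1, p.adj_snd (Walk.not_nil_of_ne hne)⟩

theorem card_le_degree_of_pairwise_edgeSet_inter_eq_empty {ι : Type*} [Fintype ι]
    (T : ι → G.Subgraph) (v : V) [Fintype (G.neighborSet v)] (hadj : ∀ i, ∃ u, (T i).Adj v u)
    (hdisj : Pairwise fun i j => (T i).edgeSet ∩ (T j).edgeSet = ∅) :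
    Fintype.card ι ≤ G.degree v := by
  choose f hf using hadj
  rw [← card_neighborSet_eq_degree]
  refine Fintype.card_le_of_injective (fun i => ⟨f i, (T i).adj_sub (hf i)⟩) fun i j hij => ?_
  by_contra hne
  have hfij : f i = f j := congrArg Subtype.val hij
  have hshared : s(v, f i) ∈ (T i).edgeSet ∩ (T j).edgeSet := ⟨hf i, hfij ▸ hf j⟩
  rw [hdisj hne] at hshared
  exact hshared

theorem degree_mem_upperBounds_edgeDisjointTrees {S : Set V} {v w : V}
    [Fintype (G.neighborSet v)] (hv : v ∈ S) (hw : w ∈ S) (hvw : v ≠ w) :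
    G.degree v ∈ upperBounds {k | ∃ T : Fin k → G.Subgraph,
      (∀ i, S ⊆ (T i).verts ∧ ((T i).coe).IsTree) ∧
      (∀ i j, i ≠ j → (T i).edgeSet ∩ (T j).edgeSet = ∅)} := by
  rintro k ⟨T, hT, hdisj⟩
  have hadj (i : Fin k) : ∃ u, (T i).Adj v u :=
    Subgraph.exists_adj_of_preconnected (hT i).2.connected.preconnected
      ((hT i).1 hv) ((hT i).1 hw) hvw
  simpa using card_le_degree_of_pairwise_edgeSet_inter_eq_empty T v hadj hdisj

end SimpleGraph

open SimpleGraph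

section

variable {V : Type*} {G : SimpleGraph V}

theorem lambdaSet_le_degree {S : Set V} {v w : V} [Fintype (G.neighborSet v)]
    (hv : v ∈ S) (hw : w ∈ S) (hvw : v ≠ w) : lambdaSet G S ≤ G.degree v :=
  csSup_le ⟨0, Fin.elim0, fun i => i.elim0, fun i => i.elim0⟩
    (degree_mem_upperBounds_edgeDisjointTrees hv hw hvw)

theorem kappaSet_le_lambdaSet [G.LocallyFinite] {S : Set V} (hS : S.Nontrivial) :
    kappaSet G S ≤ lambdaSet G S := by
  obtain ⟨v, hv, w, hw, hvw⟩ := hS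
  refine csSup_le_csSup ⟨_, degree_mem_upperBounds_edgeDisjointTrees hv hw hvw⟩
    ⟨0, Fin.elim0, fun i => i.elim0, fun i => i.elim0⟩ ?_
  rintro k ⟨T, hT, hdisj⟩
  exact ⟨T, hT, fun i j hij => (hdisj i j hij).2⟩

variable [Fintype V]

theorem genKappa_le_genLambda {r : ℕ} (hr : 2 ≤ r) :
    genKappa r G ≤ genLambda r G := by
  unfold genKappa genLambda
  split_ifs
  · by_cases hex : ∃ S : Finset V, S.card = r
    · obtain ⟨S₀, hS₀⟩ := hex
      obtain ⟨S, hS, hSmin⟩ := Nat.sInf_mem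
        (s := {k | ∃ S : Finset V, S.card = r ∧ lambdaSet G ↑S = k}) ⟨_, S₀, hS₀, rfl⟩
      have hSnt : (S : Set V).Nontrivial := Finset.one_lt_card_iff_nontrivial.mp (by omega)
      calc sInf {k | ∃ S : Finset V, S.card = r ∧ kappaSet G ↑S = k}
          ≤ kappaSet G ↑S := Nat.sInf_le ⟨S, hS, rfl⟩
        _ ≤ lambdaSet G ↑S := kappaSet_le_lambdaSet hSnt
        _ = _ := hSmin
    · push Not at hex
      simp [hex]
  · exact le_rfl

theorem exists_finset_card_eq_mem_ne {r : ℕ} (hr : 2 ≤ r) (hrV : r ≤ Fintype.card V) (v : V) :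
    ∃ S : Finset V, S.card = r ∧ v ∈ S ∧ ∃ w ∈ S, v ≠ w := by
  obtain ⟨w, hwv⟩ := Fintype.exists_ne_of_one_lt_card (by omega) v
  obtain ⟨S, hvwS, -, hS⟩ := Finset.exists_subsuperset_card_eq (Finset.subset_univ {v, w})
    ((Finset.card_le_two).trans hr) hrV
  exact ⟨S, hS, hvwS (by simp), w, hvwS (by simp), hwv.symm⟩

theorem genLambda_le_minDeg {r : ℕ} (hr : 2 ≤ r) (hrV : r ≤ Fintype.card V) :
    genLambda r G ≤ minDeg G := by
  unfold genLambda
  split_ifs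
  · have : Nonempty V := Fintype.card_pos_iff.mp (by omega)
    obtain ⟨v, hvmin⟩ := G.exists_minimal_degree_vertex
    obtain ⟨S, hS, hv, w, hw, hvw⟩ := exists_finset_card_eq_mem_ne hr hrV v
    calc sInf {k | ∃ S : Finset V, S.card = r ∧ lambdaSet G ↑S = k}
        ≤ lambdaSet G ↑S := Nat.sInf_le ⟨S, hS, rfl⟩
      _ ≤ G.degree v := lambdaSet_le_degree hv hw hvw
      _ = minDeg G := hvmin.symm
  · exact Nat.zero_le _

end

theorem genKappa_le_genLambda_le_minDeg_general {V : Type*} [Fintype V] (G : SimpleGraph V)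
    (hV : 3 ≤ Fintype.card V) :
    genKappa 3 G ≤ genLambda 3 G ∧ genLambda 3 G ≤ minDeg G :=
  ⟨genKappa_le_genLambda (by norm_num), genLambda_le_minDeg (by norm_num) hV⟩

/-- For any connected graph `G` on at least 3 vertices, `κ₃(G) ≤ λ₃(G) ≤ δ(G)`. -/
theorem genKappa_le_genLambda_le_minDeg {V : Type*} [Fintype V] (G : SimpleGraph V)
    (hG : G.Connected) (hV : 3 ≤ Fintype.card V) :
    genKappa 3 G ≤ genLambda 3 G ∧ genLambda 3 G ≤ minDeg G :=
  genKappa_le_genLambda_le_minDeg_general G hV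
end

section
/- Let G be a connected graph of order n. Then for every integer r with 3 ≤ r ≤ n, λ_r(G) ≤ λ(G), where λ(G) is the edge connectivity of G. -/
open Filter Asymptotics
open scoped Classical

/-! A set of edges `F` whose removal disconnects `a` from `b` meets every tree through `a` and `b`,
so edge-disjoint such trees number at most `|F|`. Take `F` a minimum edge cut, of size `λ(G)`,
and extend `{a, b}` to an `r`-set `S`: then `λ_r(G) ≤ λ(S) ≤ |F| = λ(G)`. -/

namespace SimpleGraph

variable {V : Type*} {G : SimpleGraph V}

theorem Subgraph.exists_mem_edgeSet_of_not_reachable_deleteEdges {H : G.Subgraph}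
    (hH : H.coe.Preconnected) {F : Set (Sym2 V)} {a b : V} (ha : a ∈ H.verts)
    (hb : b ∈ H.verts) (hab : ¬(G.deleteEdges F).Reachable a b) :
    ∃ e ∈ F, e ∈ H.edgeSet := by
  by_contra! hF
  let φ : H.coe →g G.deleteEdges F :=
    ⟨Subtype.val, fun {x y} hxy =>
      SimpleGraph.deleteEdges_adj.mpr
        ⟨H.adj_sub hxy, fun he => hF _ he (Subgraph.mem_edgeSet.mpr hxy)⟩⟩
  exact hab ((hH ⟨a, ha⟩ ⟨b, hb⟩).map φ)

theorem card_le_of_edgeDisjoint_of_forall_exists_mem {k : ℕ} {T : Fin k → G.Subgraph}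
    (hdisj : ∀ i j, i ≠ j → (T i).edgeSet ∩ (T j).edgeSet = ∅) {F : Finset (Sym2 V)}
    (hF : ∀ i, ∃ e ∈ F, e ∈ (T i).edgeSet) : k ≤ F.card := by
  choose e heF heT using hF
  simpa using Finset.card_le_card_of_injOn (s := Finset.univ) e (fun i _ => heF i)
    fun i _ j _ hij => by
    by_contra hne
    have hmem : e i ∈ (T i).edgeSet ∩ (T j).edgeSet := ⟨heT i, hij ▸ heT j⟩
    simp [hdisj i j hne] at hmem

theorem lambdaSet_le_card_of_not_reachable_deleteEdges {S : Set V} {F : Finset (Sym2 V)}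
    {a b : V} (ha : a ∈ S) (hb : b ∈ S) (hab : ¬(G.deleteEdges F).Reachable a b) :
    lambdaSet G S ≤ F.card := by
  refine csSup_le ⟨0, Fin.elim0, fun i => i.elim0, fun i => i.elim0⟩ ?_
  rintro k ⟨T, hT, hdisj⟩
  exact card_le_of_edgeDisjoint_of_forall_exists_mem hdisj fun i =>
    Subgraph.exists_mem_edgeSet_of_not_reachable_deleteEdges (hT i).2.connected.preconnected
      ((hT i).1 ha) ((hT i).1 hb) hab

variable [Fintype V]

theorem genLambda_le_lambdaSet {r : ℕ} {S : Finset V} (hS : S.card = r) :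
    genLambda r G ≤ lambdaSet G S := by
  unfold genLambda
  split_ifs
  · exact Nat.sInf_le ⟨S, hS, rfl⟩
  · exact Nat.zero_le _

theorem bddAbove_edgeConnectivity_set [Nontrivial V] :
    BddAbove {k | ∀ F : Finset (Sym2 V), F.card < k → (G.deleteEdges ↑F).Connected} := by
  refine ⟨G.edgeFinset.card, fun k hk => ?_⟩
  by_contra! hlt
  have hbot : G.deleteEdges ↑G.edgeFinset = ⊥ := by simp
  exact not_preconnected_bot (hbot ▸ hk G.edgeFinset hlt).preconnected

theorem exists_not_reachable_deleteEdges_card_le_edgeConnectivity [Nontrivial V] :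
    ∃ (F : Finset (Sym2 V)) (a b : V),
      F.card ≤ edgeConnectivity G ∧ ¬(G.deleteEdges F).Reachable a b := by
  have hnot : edgeConnectivity G + 1 ∉
      {k | ∀ F : Finset (Sym2 V), F.card < k → (G.deleteEdges ↑F).Connected} :=
    fun hmem => (le_csSup bddAbove_edgeConnectivity_set hmem).not_gt (Nat.lt_succ_self _)
  simp only [Set.mem_ofPred_eq, not_forall] at hnot
  obtain ⟨F, hFcard, hdisc⟩ := hnot
  have hpre : ¬(G.deleteEdges F).Preconnected := fun hp => hdisc ⟨hp⟩
  simp only [Preconnected, not_forall] at hpre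
  obtain ⟨a, b, hab⟩ := hpre
  exact ⟨F, a, b, Nat.lt_succ_iff.mp hFcard, hab⟩

end SimpleGraph

open SimpleGraph in
theorem genLambda_le_edgeConnectivity_general {V : Type*} [Fintype V] (G : SimpleGraph V)
    (r : ℕ) (hr : 3 ≤ r) (hrn : r ≤ Fintype.card V) :
    genLambda r G ≤ edgeConnectivity G := by
  have : Nontrivial V := Fintype.one_lt_card_iff_nontrivial.mp (by omega)
  obtain ⟨F, a, b, hF, hab⟩ := exists_not_reachable_deleteEdges_card_le_edgeConnectivity (G := G)
  obtain ⟨S, hab_sub, hS⟩ := Finset.exists_superset_card_eq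
    ((Finset.card_le_two (a := a) (b := b)).trans (by omega)) hrn
  calc genLambda r G ≤ lambdaSet G S := genLambda_le_lambdaSet hS
    _ ≤ F.card := lambdaSet_le_card_of_not_reachable_deleteEdges
        (hab_sub (by simp)) (hab_sub (by simp)) hab
    _ ≤ edgeConnectivity G := hF

/-- For a connected graph `G` of order `n` and any `3 ≤ r ≤ n`, `λ_r(G) ≤ λ(G)`. -/
theorem genLambda_le_edgeConnectivity {V : Type*} [Fintype V] (G : SimpleGraph V)
    (hG : G.Connected) (r : ℕ) (hr : 3 ≤ r) (hrn : r ≤ Fintype.card V) :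
    genLambda r G ≤ edgeConnectivity G :=
  genLambda_le_edgeConnectivity_general G r hr hrn
end

section
/- Let k ≥ 1 be a fixed integer, p(n) = (log n + (k+1)·log log n − log log log n)/n and D = log n / log log n. With probability 1 − o(n^{−3}), the following holds in G(n, p(n)): for every collection 𝒫 of at most k pairwise vertex-disjoint subtrees (in particular paths) of G, each containing at most (5/2)·D edges, and every vertex v not lying in any member of 𝒫, the vertex v has at most 12k + 1 neighbors among the vertices of the members of 𝒫. -/
open Filter Asymptotics
open scoped Classical

/-! If the conclusion fails, pigeonhole yields one of the at most `k` trees, with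
`t ≤ (5/2) D` edges, and a vertex outside it with at least `13` neighbours in it. A first-moment
count over the vertex, the `t + 1` vertices of the tree, its `t` edges and the `13` neighbours
bounds the probability of this by `n · C(n, t+1) · C(C(t+2, 2), t) · C(t+1, 13) · p^(t+13)`,
which is at most `n⁻¹¹ · (e² n p)^t · polylog n ≤ n⁻⁷`, because `n p = O(log n)` makes
`(e² n p)^t ≤ n³` for `t ≤ (5/2) log n / log log n`. Summing over `t ≤ log n` gives
`O(n⁻⁶)`. -/

open Finset Filter Real SimpleGraph

theorem Finset.sum_powerset_superset_pow_mul_pow {α R : Type*} [DecidableEq α] [CommRing R]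
    {S E : Finset α} (hE : E ⊆ S) (p : R) :
    ∑ T ∈ S.powerset with E ⊆ T, p ^ #T * (1 - p) ^ (#S - #T) = p ^ #E := by
  have key := Finset.prod_add (fun _ => p) (fun i => if i ∈ E then 0 else 1 - p) S
  have hprod : ∏ i ∈ S, (p + if i ∈ E then 0 else 1 - p) = p ^ #E := by
    simp_rw [show ∀ i, (p + if i ∈ E then 0 else 1 - p) = if i ∈ E then p else 1 by
      intro i; split_ifs <;> ring]
    rw [prod_ite_mem, inter_eq_right.mpr hE, prod_const]
  rw [← hprod, key, sum_filter]
  refine sum_congr rfl fun T hT => ?_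
  rw [mem_powerset] at hT
  simp only [prod_const]
  split_ifs with hET
  · rw [prod_ite_of_false fun i hi => (mem_sdiff.mp hi).2 ∘ (hET ·), prod_const,
      card_sdiff_of_subset hT]
  · obtain ⟨i, hiE, hiT⟩ := not_subset.mp hET
    rw [prod_eq_zero (mem_sdiff.mpr ⟨hE hiE, hiT⟩) (by simp [hiE]), mul_zero]

theorem Finset.card_union_image_mk_of_notMem {α : Type*} [DecidableEq α] {W N : Finset α}
    {F : Finset (Sym2 α)} {v : α} (hv : v ∉ W) (hF : F ⊆ W.sym2) :
    #(F ∪ N.image (s(v, ·))) = #F + #N := by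
  rw [card_union_of_disjoint, card_image_of_injective _ fun _ _ => Sym2.congr_right.mp]
  refine disjoint_right.mpr fun e he heF => ?_
  obtain ⟨w, -, rfl⟩ := mem_image.mp he
  exact hv (mem_sym2_iff.mp (hF heF) v (Sym2.mem_mk_left v w))

namespace SimpleGraph
variable {V : Type*} {G : SimpleGraph V}

theorem Subgraph.ncard_verts_eq_ncard_edgeSet_add_one_of_isTree [Finite V] {H : G.Subgraph}
    (hH : H.coe.IsTree) : H.verts.ncard = H.edgeSet.ncard + 1 := by
  have := Fintype.ofFinite V
  classical
  rw [← H.image_coe_edgeSet_coe,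
    Set.ncard_image_of_injective _ (Sym2.map.injective Subtype.val_injective), ← coe_edgeFinset,
    Set.ncard_coe_finset, hH.card_edgeFinset, Set.ncard_eq_toFinset_card',
    Set.toFinset_card]

def HasTreeWithManyNeighbours (G : SimpleGraph V) (t r : ℕ) : Prop :=
  ∃ H : G.Subgraph, H.coe.IsTree ∧ H.edgeSet.ncard = t ∧
    ∃ v ∉ H.verts, r ≤ {w ∈ H.verts | G.Adj v w}.ncard

theorem exists_hasTreeWithManyNeighbours {c k m : ℕ} (hm : m ≤ k) (P : Fin m → G.Subgraph)
    (hP : ∀ i, (P i).coe.IsTree) (v : V) (hv : ∀ i, v ∉ (P i).verts)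
    (h : c * k < {w ∈ ⋃ i, (P i).verts | G.Adj v w}.ncard) :
    ∃ i, G.HasTreeWithManyNeighbours (P i).edgeSet.ncard (c + 1) := by
  have hunion :
      {w ∈ ⋃ i, (P i).verts | G.Adj v w} = ⋃ i, {w ∈ (P i).verts | G.Adj v w} := by
    ext w; simp
  by_contra! hsmall
  have hle : ∀ i, {w ∈ (P i).verts | G.Adj v w}.ncard ≤ c := fun i => by
    by_contra! hi
    exact hsmall i ⟨P i, hP i, rfl, v, hv i, hi⟩
  have := calc {w ∈ ⋃ i, (P i).verts | G.Adj v w}.ncard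
      ≤ ∑ i, {w ∈ (P i).verts | G.Adj v w}.ncard :=
        hunion ▸ Set.ncard_iUnion_le_of_fintype _
    _ ≤ ∑ _i : Fin m, c := sum_le_sum fun i _ => hle i
    _ ≤ c * k := by simpa [mul_comm] using Nat.mul_le_mul_left c hm
  omega

theorem HasTreeWithManyNeighbours.exists_finsets [Fintype V] [DecidableEq V] {t r : ℕ}
    (h : G.HasTreeWithManyNeighbours t r) :
    ∃ v ∈ (univ : Finset V), ∃ W ∈ (univ.erase v).powersetCard (t + 1),
      ∃ F ∈ W.sym2.powersetCard t, ∃ N ∈ W.powersetCard r,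
        ↑(F ∪ N.image (s(v, ·))) ⊆ G.edgeSet := by
  obtain ⟨H, hH, rfl, v, hv, hr⟩ := h
  have hr' : r ≤ #{w ∈ H.verts.toFinset | G.Adj v w} := by
    simpa only [← Set.ncard_coe_finset, coe_filter, Set.mem_toFinset] using hr
  obtain ⟨N, hN, rfl⟩ := exists_subset_card_eq hr'
  refine ⟨v, mem_univ v, H.verts.toFinset, ?_, H.edgeSet.toFinset, ?_, N, ?_, ?_⟩
  · rw [mem_powersetCard, ← Set.ncard_eq_toFinset_card',
      Subgraph.ncard_verts_eq_ncard_edgeSet_add_one_of_isTree hH]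
    refine ⟨fun w hw => mem_erase.mpr ⟨?_, mem_univ w⟩, rfl⟩
    rintro rfl
    exact hv (Set.mem_toFinset.mp hw)
  · rw [mem_powersetCard, ← Set.ncard_eq_toFinset_card']
    refine ⟨fun e he => ?_, rfl⟩
    induction e with
    | _ a b =>
      rw [Set.mem_toFinset] at he
      exact mk_mem_sym2_iff.mpr ⟨Set.mem_toFinset.mpr (H.edge_vert he),
        Set.mem_toFinset.mpr (H.edge_vert (H.adj_symm he))⟩
  · exact mem_powersetCard.mpr ⟨hN.trans (filter_subset _ _), rfl⟩
  · intro e he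
    rcases mem_union.mp he with he | he
    · exact H.edgeSet_subset (Set.mem_toFinset.mp he)
    · obtain ⟨w, hw, rfl⟩ := mem_image.mp he
      exact (mem_filter.mp (hN hw)).2

end SimpleGraph

section GnpProb

variable {n : ℕ} {p : ℝ}

theorem gnpProb_edgeSet_superset {E : Finset (Sym2 (Fin n))}
    (hE : E ⊆ (⊤ : SimpleGraph (Fin n)).edgeFinset) :
    gnpProb n p {G | ↑E ⊆ G.edgeSet} = p ^ #E := by
  rw [← sum_powerset_superset_pow_mul_pow hE, card_edgeFinset_top_eq_card_choose_two,
    Fintype.card_fin, gnpProb]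
  have edgeSet_fromEdgeSet_of_subset {T : Finset (Sym2 (Fin n))}
      (hT : T ⊆ (⊤ : SimpleGraph (Fin n)).edgeFinset) :
      (fromEdgeSet (T : Set (Sym2 (Fin n)))).edgeSet = T := by
    rw [edgeSet_fromEdgeSet, sdiff_eq_left, Set.disjoint_right]
    intro e he heT
    simpa [he] using hT heT
  refine sum_nbij' (fun G => G.edgeFinset) (fun T => fromEdgeSet ↑T) ?_ ?_ ?_ ?_ ?_
  · intro G hG
    simp only [Set.mem_ofPred_eq, mem_filter, mem_univ, true_and, mem_powerset] at hG ⊢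
    exact ⟨edgeFinset_mono le_top, by rwa [← coe_subset, coe_edgeFinset]⟩
  · intro T hT
    simp only [Set.mem_ofPred_eq, mem_filter, mem_univ, true_and, mem_powerset] at hT ⊢
    rw [edgeSet_fromEdgeSet_of_subset hT.1]
    exact_mod_cast hT.2
  · intro G _
    simp
  · intro T hT
    simp only [mem_filter, mem_powerset] at hT
    rw [← coe_inj, coe_edgeFinset, edgeSet_fromEdgeSet_of_subset hT.1]
  · intro G _
    rfl

theorem gnp_weight_nonneg (hp₀ : 0 ≤ p) (hp₁ : p ≤ 1) (G : SimpleGraph (Fin n)) :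
    0 ≤ p ^ edgeCount G * (1 - p) ^ (n.choose 2 - edgeCount G) := by
  have := sub_nonneg.2 hp₁
  positivity

theorem gnpProb_nonneg (hp₀ : 0 ≤ p) (hp₁ : p ≤ 1) (A : Set (SimpleGraph (Fin n))) :
    0 ≤ gnpProb n p A :=
  sum_nonneg fun G _ => gnp_weight_nonneg hp₀ hp₁ G

theorem gnpProb_mono (hp₀ : 0 ≤ p) (hp₁ : p ≤ 1) {A B : Set (SimpleGraph (Fin n))}
    (hAB : A ⊆ B) : gnpProb n p A ≤ gnpProb n p B :=
  sum_le_sum_of_subset_of_nonneg (monotone_filter_right _ fun _ _ hG => hAB hG) fun G _ _ =>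
    gnp_weight_nonneg hp₀ hp₁ G

theorem gnpProb_exists_mem_le (hp₀ : 0 ≤ p) (hp₁ : p ≤ 1) {ι : Type*} (s : Finset ι)
    (P : ι → SimpleGraph (Fin n) → Prop) :
    gnpProb n p {G | ∃ i ∈ s, P i G} ≤ ∑ i ∈ s, gnpProb n p {G | P i G} := by
  have hw := gnp_weight_nonneg (n := n) hp₀ hp₁
  simp only [gnpProb, sum_filter]
  rw [sum_comm]
  refine sum_le_sum fun G _ => ?_
  split_ifs with h
  · obtain ⟨i, hi, hPi⟩ := h
    refine le_trans (le_of_eq ?_) (single_le_sum (fun j _ => ?_) hi)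
    · simp [hPi]
    · split_ifs <;> simp [hw]
  · exact sum_nonneg fun j _ => by split_ifs <;> simp [hw]

theorem gnpProb_exists_mem_le_card_mul (hp₀ : 0 ≤ p) (hp₁ : p ≤ 1) {ι : Type*}
    (s : Finset ι) (P : ι → SimpleGraph (Fin n) → Prop) {c : ℝ}
    (h : ∀ i ∈ s, gnpProb n p {G | P i G} ≤ c) :
    gnpProb n p {G | ∃ i ∈ s, P i G} ≤ #s * c :=
  (gnpProb_exists_mem_le hp₀ hp₁ s P).trans (by simpa using sum_le_card_nsmul s _ c h)

theorem gnpProb_edgeSet_superset_le (hp₀ : 0 ≤ p) (E : Finset (Sym2 (Fin n))) :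
    gnpProb n p {G | ↑E ⊆ G.edgeSet} ≤ p ^ #E := by
  by_cases hE : E ⊆ (⊤ : SimpleGraph (Fin n)).edgeFinset
  · exact (gnpProb_edgeSet_superset hE).le
  · obtain ⟨e, heE, he⟩ := not_subset.mp hE
    have : {G : SimpleGraph (Fin n) | ↑E ⊆ G.edgeSet} = ∅ :=
      Set.eq_empty_of_forall_notMem fun G hG => he (edgeFinset_mono le_top (by simpa using hG heE))
    simp [this, gnpProb, pow_nonneg hp₀]

/-- The union bound for a tree with `t` edges and an outside vertex with `r` neighbours in it:
`n` choices of the vertex, `C(n, t+1)` of the vertex set `W` of the tree, `C(C(t+2, 2), t)` of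
its edges among the pairs of `W` (diagonal ones included), `C(t+1, r)` of the neighbours, and
probability `p^(t+r)` for these `t + r` edges to be present. -/
noncomputable def firstMomentBound (n t r : ℕ) (p : ℝ) : ℝ :=
  n * (n.choose (t + 1) * (((t + 2).choose 2).choose t * ((t + 1).choose r * p ^ (t + r))))

theorem gnpProb_hasTreeWithManyNeighbours_le (hp₀ : 0 ≤ p) (hp₁ : p ≤ 1) (t r : ℕ) :
    gnpProb n p {G | G.HasTreeWithManyNeighbours t r} ≤ firstMomentBound n t r p := by
  rw [firstMomentBound]
  refine (gnpProb_mono hp₀ hp₁ fun G hG => hG.exists_finsets).trans ?_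
  refine (gnpProb_exists_mem_le_card_mul hp₀ hp₁ univ _ fun v _ => ?_).trans_eq
    (by rw [card_univ, Fintype.card_fin])
  refine (gnpProb_exists_mem_le_card_mul hp₀ hp₁ _ _ fun W hW => ?_).trans
    (mul_le_mul_of_nonneg_right ?_ (by positivity))
  · rw [mem_powersetCard] at hW
    refine (gnpProb_exists_mem_le_card_mul hp₀ hp₁ _ _ fun F hF => ?_).trans_eq
      (by rw [card_powersetCard, card_sym2, hW.2])
    refine (gnpProb_exists_mem_le_card_mul hp₀ hp₁ _ _ fun N hN => ?_).trans_eq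
      (by rw [card_powersetCard, hW.2])
    rw [mem_powersetCard] at hF hN
    have hvW : v ∉ W := fun hv => (mem_erase.mp (hW.1 hv)).1 rfl
    calc _ ≤ p ^ #(F ∪ N.image (s(v, ·))) := gnpProb_edgeSet_superset_le hp₀ _
      _ = p ^ (t + r) := by rw [card_union_image_mk_of_notMem hvW hF.1, hF.2, hN.2]
  · rw [card_powersetCard, card_erase_of_mem (mem_univ v), card_univ, Fintype.card_fin]
    exact_mod_cast Nat.choose_le_choose _ (n.sub_le 1)

end GnpProb

theorem cast_choose_mul_choose_choose_le (n t : ℕ) :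
    (n.choose (t + 1) : ℝ) * ((t + 2).choose 2).choose t ≤ n ^ (t + 1) * exp (t + 2) ^ 2 := by
  have h₁ : (n.choose (t + 1) : ℝ) ≤ n ^ (t + 1) / (t + 1).factorial :=
    Nat.choose_le_pow_div _ _
  have h₂ : (((t + 2).choose 2).choose t : ℝ) ≤ ((t + 2 : ℝ) ^ 2) ^ t / t.factorial := by
    refine (Nat.choose_le_pow_div _ _).trans ?_
    gcongr
    exact_mod_cast Nat.choose_le_pow _ _
  have h₃ : (t + 2 : ℝ) ^ t / (t + 1).factorial ≤ exp (t + 2) := by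
    refine le_trans ?_ (pow_div_factorial_le_exp _ (by positivity) (t + 1))
    gcongr
    · linarith
    · omega
  have h₄ : (t + 2 : ℝ) ^ t / t.factorial ≤ exp (t + 2) :=
    pow_div_factorial_le_exp _ (by positivity) t
  calc (n.choose (t + 1) : ℝ) * ((t + 2).choose 2).choose t
      ≤ n ^ (t + 1) / (t + 1).factorial * (((t + 2 : ℝ) ^ 2) ^ t / t.factorial) := by
        gcongr
    _ = n ^ (t + 1) * ((t + 2 : ℝ) ^ t / (t + 1).factorial) *
          ((t + 2 : ℝ) ^ t / t.factorial) := by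
        rw [sq, mul_pow]
        ring
    _ ≤ n ^ (t + 1) * exp (t + 2) ^ 2 := by
        rw [sq, ← mul_assoc]
        gcongr

theorem firstMomentBound_mul_pow_le (n t r : ℕ) {p : ℝ} (hp : 0 ≤ p) :
    firstMomentBound n t r p * n ^ r ≤
      n ^ 2 * ((exp 2 * (n * p)) ^ t * (exp 4 * ((t + 1) * (n * p)) ^ r)) := by
  have hr : ((t + 1).choose r : ℝ) ≤ (t + 1) ^ r := by exact_mod_cast Nat.choose_le_pow _ _
  have hexp : exp (t + 2) ^ 2 = exp 2 ^ t * exp 4 := by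
    rw [← exp_nat_mul, ← exp_nat_mul, ← exp_add]
    push_cast
    ring_nf
  calc _ = n * ((n.choose (t + 1) : ℝ) * ((t + 2).choose 2).choose t) * (t + 1).choose r *
        p ^ (t + r) * (n : ℝ) ^ r := by rw [firstMomentBound]; ring
    _ ≤ n * (n ^ (t + 1) * exp (t + 2) ^ 2) * (t + 1) ^ r * p ^ (t + r) * (n : ℝ) ^ r := by
        gcongr _ * ?_ * ?_ * _ * _
        exact cast_choose_mul_choose_choose_le n t
    _ = _ := by
        simp only [hexp, mul_pow]
        ring

theorem firstMomentBound_le_inv_pow_seven {n t : ℕ} {p : ℝ} (hp : 0 ≤ p) (hn : 0 < (n : ℝ))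
    (h₁ : (exp 2 * (n * p)) ^ t ≤ (n : ℝ) ^ 3)
    (h₂ : exp 4 * ((t + 1) * (n * p)) ^ 13 ≤ n) :
    firstMomentBound n t 13 p ≤ ((n : ℝ) ^ 7)⁻¹ := by
  rw [← mul_le_mul_iff_of_pos_right (pow_pos hn 13)]
  calc _ ≤ (n : ℝ) ^ 2 * ((exp 2 * (n * p)) ^ t * (exp 4 * ((t + 1) * (n * p)) ^ 13)) :=
        firstMomentBound_mul_pow_le n t 13 hp
    _ ≤ (n : ℝ) ^ 2 * ((n : ℝ) ^ 3 * n) := by gcongr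
    _ = ((n : ℝ) ^ 7)⁻¹ * (n : ℝ) ^ 13 := by field_simp

theorem exp_two_mul_pow_le_exp_three_mul {K X : ℝ} {t : ℕ} (hK : 0 < K) (hX : 0 < X)
    (hKX : 2 + log K ≤ log X / 5) (ht : t * log X ≤ 5 / 2 * X) :
    (exp 2 * (K * X)) ^ t ≤ exp (3 * X) := by
  rw [← exp_log (by positivity : 0 < exp 2 * (K * X)), ← exp_nat_mul, log_mul (by positivity)
    (by positivity), log_mul hK.ne' hX.ne', log_exp]
  exact exp_le_exp.2 (by nlinarith [(Nat.cast_nonneg t : (0 : ℝ) ≤ t)])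

theorem eventually_sum_firstMomentBound_le {K : ℝ} (hK : 0 < K) :
    ∀ᶠ n : ℕ in atTop, ∀ p : ℝ, 0 ≤ p → n * p ≤ K * log n →
      ∑ t ∈ range (⌊5 / 2 * (log n / log (log n))⌋₊ + 1), firstMomentBound n t 13 p
        ≤ ((n : ℝ) ^ 6)⁻¹ := by
  have hC : 0 < exp 4 * K ^ 13 := by positivity
  have hlog := tendsto_log_atTop.comp tendsto_natCast_atTop_atTop
  filter_upwards [eventually_gt_atTop 0, hlog.eventually_ge_atTop 2,
    (tendsto_log_atTop.comp hlog).eventually_ge_atTop 10,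
    (tendsto_log_atTop.comp hlog).eventually_ge_atTop (5 * (2 + log K)),
    tendsto_natCast_atTop_atTop.eventually
      ((isLittleO_pow_log_id_atTop (n := 26)).bound (inv_pos.2 hC))]
    with n hn hX hY hYK hpoly p hp hq
  simp only [Function.comp_apply] at hX hY hYK
  rw [id, norm_of_nonneg (by positivity), norm_of_nonneg (Nat.cast_nonneg n), ← div_eq_inv_mul,
    le_div_iff₀' hC] at hpoly
  replace hn : 0 < (n : ℝ) := Nat.cast_pos.2 hn
  set X := log (n : ℝ)
  set L := 5 / 2 * (X / log X) with hL
  have hLX : L ≤ X / 4 := by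
    have : X / log X ≤ X / 10 := div_le_div_of_nonneg_left (by linarith) (by norm_num) hY
    linarith
  have hterm (t : ℕ) (ht : t ≤ ⌊L⌋₊) :
      firstMomentBound n t 13 p ≤ ((n : ℝ) ^ 7)⁻¹ := by
    have htL : (t : ℝ) ≤ L := (Nat.cast_le.2 ht).trans (Nat.floor_le (by positivity))
    refine firstMomentBound_le_inv_pow_seven hp hn ?_ ?_
    · calc (exp 2 * (n * p)) ^ t ≤ (exp 2 * (K * X)) ^ t := by gcongr
        _ ≤ exp (3 * X) := exp_two_mul_pow_le_exp_three_mul hK (by linarith) (by linarith)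
            (by rwa [← le_div_iff₀ (by linarith), mul_div_assoc])
        _ = (n : ℝ) ^ 3 := by rw [← Nat.cast_ofNat, ← log_pow, exp_log (by positivity)]
    · calc exp 4 * ((t + 1) * (n * p)) ^ 13 ≤ exp 4 * (X * (K * X)) ^ 13 := by
            gcongr; linarith
        _ = exp 4 * K ^ 13 * X ^ 26 := by ring
        _ ≤ n := by linarith
  have hfloor : (⌊L⌋₊ : ℝ) + 1 ≤ n := by
    linarith [Nat.floor_le (show 0 ≤ L by positivity), log_le_self hn.le]
  calc _ ≤ ∑ _t ∈ range (⌊L⌋₊ + 1), ((n : ℝ) ^ 7)⁻¹ :=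
        sum_le_sum fun t ht => hterm t (Nat.lt_succ_iff.1 (mem_range.1 ht))
    _ ≤ n * ((n : ℝ) ^ 7)⁻¹ := by
        rw [sum_const, card_range, nsmul_eq_mul]; push_cast; gcongr
    _ = ((n : ℝ) ^ 6)⁻¹ := by field_simp

noncomputable def edgeProb (k n : ℕ) : ℝ :=
  (Real.log n + ((k : ℝ) + 1) * Real.log (Real.log n) - Real.log (Real.log (Real.log n))) / n

theorem eventually_edgeProb_bounds (k : ℕ) :
    ∀ᶠ n : ℕ in atTop,
      0 ≤ edgeProb k n ∧ edgeProb k n ≤ 1 ∧ n * edgeProb k n ≤ (k + 2) * log n := by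
  have hlog := tendsto_log_atTop.comp tendsto_natCast_atTop_atTop
  filter_upwards [eventually_gt_atTop 0, (tendsto_log_atTop.comp hlog).eventually_ge_atTop 1,
    tendsto_natCast_atTop_atTop.eventually
      (isLittleO_log_id_atTop.bound (inv_pos.2 (by positivity : (0 : ℝ) < k + 2)))]
    with n hn hY hlin
  simp only [Function.comp_apply] at hY
  rw [id, norm_of_nonneg (log_natCast_nonneg n), norm_of_nonneg (Nat.cast_nonneg n),
    ← div_eq_inv_mul, le_div_iff₀' (by positivity)] at hlin
  replace hn : 0 < (n : ℝ) := Nat.cast_pos.2 hn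
  set X := log (n : ℝ)
  set Y := log X
  have hYX : Y ≤ X := log_le_self (log_natCast_nonneg n)
  have hlogY : 0 ≤ log Y := log_nonneg hY
  have hlogY' : log Y ≤ Y := log_le_self (by linarith)
  have hq : n * edgeProb k n = X + (k + 1) * Y - log Y := mul_div_cancel₀ _ hn.ne'
  have hqK : X + (k + 1) * Y - log Y ≤ (k + 2) * X := by
    linarith [mul_le_mul_of_nonneg_left hYX (by positivity : (0 : ℝ) ≤ k + 1)]
  refine ⟨div_nonneg ?_ hn.le, (div_le_one hn).2 (hqK.trans hlin), hq ▸ hqK⟩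
  nlinarith [(Nat.cast_nonneg k : (0 : ℝ) ≤ k)]

theorem isLittleO_rpow_neg_three_of_le_inv_pow_six {f : ℕ → ℝ}
    (hf : ∀ᶠ n : ℕ in atTop, ‖f n‖ ≤ ((n : ℝ) ^ 6)⁻¹) :
    f =o[atTop] fun n : ℕ => (n : ℝ) ^ (-3 : ℝ) := by
  have hg : Tendsto (fun n : ℕ => (n : ℝ) ^ (-3 : ℝ)) atTop (nhds 0) :=
    (tendsto_rpow_neg_atTop (by norm_num)).comp tendsto_natCast_atTop_atTop
  refine IsBigO.trans_isLittleO (IsBigO.of_bound 1 ?_)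
    ((((isLittleO_one_iff ℝ).2 hg).mul_isBigO (isBigO_refl _ _)).congr_right fun n => one_mul _)
  filter_upwards [hf, eventually_gt_atTop 0] with n hfn hn
  rwa [one_mul, ← rpow_add (Nat.cast_pos.2 hn), show (-3 : ℝ) + -3 = -(6 : ℕ) by norm_num,
    rpow_neg (Nat.cast_nonneg n), rpow_natCast,
    norm_of_nonneg (by positivity : (0 : ℝ) ≤ ((n : ℝ) ^ 6)⁻¹)]

theorem few_neighbours_in_forest_general (k : ℕ) :
    (fun n : ℕ =>
      gnpProb n ((Real.log n + ((k : ℝ) + 1) * Real.log (Real.log n) -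
          Real.log (Real.log (Real.log n))) / n)
        {G : SimpleGraph (Fin n) | ¬ ∀ (m : ℕ), m ≤ k → ∀ P : Fin m → G.Subgraph,
          (∀ i, (P i).coe.IsTree) →
          (∀ i, ((P i).edgeSet.ncard : ℝ) ≤ 5 / 2 * (Real.log n / Real.log (Real.log n))) →
          (∀ i j, i ≠ j → Disjoint (P i).verts (P j).verts) →
          ∀ v : Fin n, (∀ i, v ∉ (P i).verts) →
            ({w ∈ ⋃ i, (P i).verts | G.Adj v w}).ncard ≤ 12 * k + 1})
      =o[atTop] fun n : ℕ => (n : ℝ) ^ (-3 : ℝ) := by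
  refine isLittleO_rpow_neg_three_of_le_inv_pow_six ?_
  filter_upwards [eventually_edgeProb_bounds k,
    eventually_sum_firstMomentBound_le (K := k + 2) (by positivity)]
    with n ⟨hp₀, hp₁, hq⟩ hsum
  change ‖gnpProb n (edgeProb k n) _‖ ≤ _
  set L := 5 / 2 * (Real.log n / Real.log (Real.log n))
  rw [norm_of_nonneg (gnpProb_nonneg hp₀ hp₁ _)]
  calc _ ≤ gnpProb n (edgeProb k n)
        {G | ∃ t ∈ range (⌊L⌋₊ + 1), G.HasTreeWithManyNeighbours t 13} := by
        refine gnpProb_mono hp₀ hp₁ fun G hG => ?_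
        by_contra hG'
        refine hG fun m hm P hP hL _ v hv => ?_
        by_contra! hlt
        obtain ⟨i, hi⟩ := exists_hasTreeWithManyNeighbours (c := 12) hm P hP v hv (by omega)
        exact hG' ⟨_, mem_range.2 (Nat.lt_succ_of_le (Nat.le_floor (hL i))), hi⟩
    _ ≤ ∑ t ∈ range (⌊L⌋₊ + 1),
          gnpProb n (edgeProb k n) {G | G.HasTreeWithManyNeighbours t 13} :=
        gnpProb_exists_mem_le hp₀ hp₁ _ _
    _ ≤ ((n : ℝ) ^ 6)⁻¹ :=
        (sum_le_sum fun t _ => gnpProb_hasTreeWithManyNeighbours_le hp₀ hp₁ t 13).trans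
          (hsum _ hp₀ hq)

/-- With probability `1 − o(n⁻³)`, for every collection of at most `k` pairwise
vertex-disjoint subtrees of `G(n, p(n))`, each with at most `(5/2)·D` edges, every vertex
outside the collection has at most `12k + 1` neighbours in it, where `D = log n/log log n`:
the probability of the complementary event is `o(n⁻³)`. -/
theorem few_neighbours_in_forest (k : ℕ) (hk : 1 ≤ k) :
    (fun n : ℕ =>
      gnpProb n ((Real.log n + ((k : ℝ) + 1) * Real.log (Real.log n) -
          Real.log (Real.log (Real.log n))) / n)
        {G : SimpleGraph (Fin n) | ¬ ∀ (m : ℕ), m ≤ k → ∀ P : Fin m → G.Subgraph,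
          (∀ i, (P i).coe.IsTree) →
          (∀ i, ((P i).edgeSet.ncard : ℝ) ≤ 5 / 2 * (Real.log n / Real.log (Real.log n))) →
          (∀ i j, i ≠ j → Disjoint (P i).verts (P j).verts) →
          ∀ v : Fin n, (∀ i, v ∉ (P i).verts) →
            ({w ∈ ⋃ i, (P i).verts | G.Adj v w}).ncard ≤ 12 * k + 1})
      =o[atTop] fun n : ℕ => (n : ℝ) ^ (-3 : ℝ) :=
  few_neighbours_in_forest_general k
end
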